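/- Let R be a commutative ring with unity, l ∈ ℕ, and I = Q_1·Q_2⋯Q_l where each Q_i ⊆ R is an ideal whose radical rad(Q_i) = M_i is a maximal ideal and M_i ≠ M_j for i ≠ j. Define the relation ∼^R_I on GCD_{k+1}(R) by (a_0,…,a_k) ∼^R_I (b_0,…,b_k) iff a_i b_j − b_i a_j ∈ I for all 0 ≤ i,j ≤ k. Then the two relations ∼^R_I and ∼^{k,(1,1,…,1)}_I on GCD_{k+1}(R) are identical. -/

import Mathlib

/-!
By the Chinese remainder theorem `R ⧸ ∏ Qᵢ` is the product of the rings `R ⧸ Qᵢ`, each of which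
is local since its nilradical `Mᵢ ⧸ Qᵢ` is maximal. In a local ring a unimodular vector has a unit
entry, so when all `2 × 2` minors of two unimodular vectors `a`, `b` vanish, `a = u • b` for the
unit `u = aⱼ / bⱼ`, where `bⱼ` is a unit. These scalars glue across the factors.
-/

theorem Ideal.sum_span_singleton_eq_span_range {R ι : Type*} [CommRing R] [Fintype ι]
    (a : ι → R) : ∑ i, Ideal.span {a i} = Ideal.span (Set.range a) := by
  simp [Ideal.span_range_eq_iSup, Finset.sup_univ_eq_iSup]

theorem Ideal.span_range_comp_eq_top {R S F ι : Type*} [CommRing R] [CommRing S] [FunLike F R S]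
    [RingHomClass F R S] (f : F) {a : ι → R} (ha : Ideal.span (Set.range a) = ⊤) :
    Ideal.span (Set.range (f ∘ a)) = ⊤ := by
  rw [Set.range_comp, ← Ideal.map_span, ha, Ideal.map_top]

theorem Ideal.isCoprime_of_isCoprime_radical {R : Type*} [CommRing R] {I J : Ideal R}
    (h : IsCoprime I.radical J.radical) : IsCoprime I J := by
  rw [Ideal.isCoprime_iff_sup_eq, ← Ideal.radical_eq_top, Ideal.radical_sup, h.sup_eq,
    Ideal.radical_top]

theorem Ideal.Quotient.isLocalRing_of_isMaximal_radical {R : Type*} [CommRing R] {Q : Ideal R}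
    (h : Q.radical.IsMaximal) : IsLocalRing (R ⧸ Q) := by
  have hnil : nilradical (R ⧸ Q) = Q.radical.map (Ideal.Quotient.mk Q) := by
    rw [Ideal.map_radical_of_surjective Ideal.Quotient.mk_surjective Ideal.mk_ker.le,
      Ideal.map_quotient_self]
    rfl
  have : (nilradical (R ⧸ Q)).IsMaximal := hnil ▸
    Ideal.IsMaximal.map_of_surjective_of_ker_le Ideal.Quotient.mk_surjective
      (Ideal.mk_ker.trans_le Ideal.le_radical)
  exact IsLocalRing.of_isMaximal_nilradical _

namespace IsLocalRing

variable {S ι : Type*} [CommRing S] [IsLocalRing S]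

theorem exists_isUnit_of_span_range_eq_top {a : ι → S} (ha : Ideal.span (Set.range a) = ⊤) :
    ∃ i, IsUnit (a i) := by
  by_contra! h
  have : Ideal.span (Set.range a) ≤ maximalIdeal S :=
    Ideal.span_le.mpr (Set.range_subset_iff.mpr h)
  exact (maximalIdeal.isMaximal S).ne_top (top_le_iff.mp (ha ▸ this))

theorem exists_unit_mul_eq_of_mul_eq_mul {a b : ι → S} (ha : Ideal.span (Set.range a) = ⊤)
    (hb : Ideal.span (Set.range b) = ⊤) (h : ∀ i j, a i * b j = b i * a j) :
    ∃ u : Sˣ, ∀ i, a i = u * b i := by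
  obtain ⟨i, hai⟩ := exists_isUnit_of_span_range_eq_top ha
  obtain ⟨j, hbj⟩ := exists_isUnit_of_span_range_eq_top hb
  have haj : IsUnit (a j) := isUnit_of_mul_isUnit_right (h i j ▸ hai.mul hbj)
  refine ⟨haj.unit * hbj.unit⁻¹, fun k => ?_⟩
  rw [Units.val_mul, IsUnit.unit_spec, mul_right_comm, mul_comm (a j), ← h, mul_assoc,
    IsUnit.mul_val_inv, mul_one]

end IsLocalRing

theorem RingEquiv.exists_unit_mul_eq_of_mul_eq_mul {S ι κ : Type*} [CommRing S]
    {T : κ → Type*} [∀ t, CommRing (T t)] [∀ t, IsLocalRing (T t)] (e : S ≃+* ∀ t, T t)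
    {a b : ι → S} (ha : Ideal.span (Set.range a) = ⊤) (hb : Ideal.span (Set.range b) = ⊤)
    (h : ∀ i j, a i * b j = b i * a j) :
    ∃ u : Sˣ, ∀ i, a i = u * b i := by
  let π t : S →+* T t := (Pi.evalRingHom T t).comp e.toRingHom
  choose u hu using fun t => IsLocalRing.exists_unit_mul_eq_of_mul_eq_mul
    (Ideal.span_range_comp_eq_top (π t) ha) (Ideal.span_range_comp_eq_top (π t) hb)
    fun i j => by simp only [Function.comp_apply, ← map_mul, h]
  refine ⟨Units.map e.symm.toMonoidHom (MulEquiv.piUnits.symm u), fun i => e.injective ?_⟩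
  funext t
  simpa [π] using hu t i

theorem Ideal.forall_mul_sub_mul_mem_iff_exists_isUnit_sub_mul_mem {R ι κ : Type*} [CommRing R]
    {I : Ideal R} {T : κ → Type*} [∀ t, CommRing (T t)] [∀ t, IsLocalRing (T t)]
    (e : R ⧸ I ≃+* ∀ t, T t) {a b : ι → R} (ha : Ideal.span (Set.range a) = ⊤)
    (hb : Ideal.span (Set.range b) = ⊤) :
    (∀ i j, a i * b j - b i * a j ∈ I) ↔
      ∃ lam : R, IsUnit (Ideal.Quotient.mk I lam) ∧ ∀ i, a i - lam * b i ∈ I := by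
  constructor
  · intro h
    obtain ⟨u, hu⟩ := e.exists_unit_mul_eq_of_mul_eq_mul
      (Ideal.span_range_comp_eq_top (Ideal.Quotient.mk I) ha)
      (Ideal.span_range_comp_eq_top (Ideal.Quotient.mk I) hb)
      fun i j => by simpa only [Function.comp_apply, ← map_mul] using Ideal.Quotient.eq.mpr (h i j)
    obtain ⟨lam, hlam⟩ := Ideal.Quotient.mk_surjective (u : R ⧸ I)
    refine ⟨lam, hlam ▸ u.isUnit, fun i => Ideal.Quotient.eq.mp ?_⟩
    rw [map_mul, hlam]
    exact hu i
  · rintro ⟨lam, -, h⟩ i j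
    have : a i * b j - b i * a j = (a i - lam * b i) * b j - (a j - lam * b j) * b i := by ring
    rw [this]
    exact sub_mem (Ideal.mul_mem_right _ _ (h i)) (Ideal.mul_mem_right _ _ (h j))

theorem projRel_eq_crossRel {R : Type*} [CommRing R] (k l : ℕ)
    (Q : Fin l → Ideal R) (M : Fin l → Ideal R)
    (hmax : ∀ i, (M i).IsMaximal)
    (hrad : ∀ i, (Q i).radical = M i)
    (hdist : ∀ i j, i ≠ j → M i ≠ M j)
    (a b : Fin (k + 1) → R)
    (ha : ∑ i, Ideal.span {a i} = ⊤) (hb : ∑ i, Ideal.span {b i} = ⊤) :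
    (∀ i j, a i * b j - b i * a j ∈ ∏ i, Q i) ↔
      ∃ lam : R, IsUnit (Ideal.Quotient.mk (∏ i, Q i) lam) ∧
        ∀ i, a i - lam * b i ∈ ∏ i, Q i := by
  have hcop : Pairwise (Function.onFun IsCoprime Q) := fun i j hij =>
    Ideal.isCoprime_of_isCoprime_radical <| by
      rw [hrad, hrad]
      exact Ideal.isCoprime_iff_sup_eq.mpr ((hmax i).coprime_of_ne (hmax j) (hdist i j hij))
  have hprod : ∏ i, Q i = ⨅ i, Q i := by
    simpa using Ideal.prod_eq_iInf_of_pairwise_isCoprime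
      (hcop.set_pairwise (Finset.univ : Finset (Fin l)))
  have (t : Fin l) : IsLocalRing (R ⧸ Q t) :=
    Ideal.Quotient.isLocalRing_of_isMaximal_radical (hrad t ▸ hmax t)
  rw [Ideal.sum_span_singleton_eq_span_range] at ha hb
  rw [hprod]
  exact Ideal.forall_mul_sub_mul_mem_iff_exists_isUnit_sub_mul_mem
    (Ideal.quotientInfRingEquivPiQuotient Q hcop) ha hb
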